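/- arXiv:0910.4698 — 2 statements merged into one kernel-verified Lean document; each statement's English description precedes it below -/
import Mathlib

section
/- Suppose for every AC^0-computable Boolean function f : {0,1}^n → {0,1} there exist polynomials p_ℓ, p_u : ℝ^n → ℝ of degree n^{o(1)} such that (i) p_ℓ(x) ≤ f(x) ≤ p_u(x) for all x ∈ {0,1}^n, (ii) E_{x∼U}[p_u(x) - p_ℓ(x)] = o(1), and (iii) both p_ℓ and p_u can be written as linear combinations of terms, p(x) = ∑_C α_C C(x), with ∑_C |α_C| 2^{-|C|} = n^{o(1)}. Then for every distribution D over {0,1}^n that is ε-almost k-wise independent with ε = 1/n^{Ω(1)} and k ≥ the degree bound, |Pr_{x∼D}[f(x)=1] - Pr_{x∼U}[f(x)=1]| = o(1). -/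
open Finset

/-- A term over `{0,1}^n`: the product of literals `x_i` for `i ∈ S` and `(1-x_i)` for
`i ∈ T`, evaluated at a Boolean point (value in `{0,1}`). -/
def termVal {n : ℕ} (S T : Finset (Fin n)) (x : Fin n → Bool) : ℝ :=
  if (∀ i ∈ S, x i = true) ∧ (∀ i ∈ T, x i = false) then 1 else 0

/-! Averaging against `D` and against the uniform distribution are both linear, and a term `C`
has uniform mean `2^{-|C|}`, so on `p = ∑ γ_C C` the two averages differ by at most
`ε ∑ |γ_C| 2^{-|C|} ≤ ε M`. Sandwiching then gives
`E_D f ≤ E_D p_u ≤ E_U p_u + ε M ≤ E_U p_ℓ + δ + ε M ≤ E_U f + δ + ε M`, and symmetrically. -/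

section

variable {n : ℕ}

def literalVal (S T : Finset (Fin n)) (i : Fin n) (b : Bool) : ℝ :=
  if (i ∈ S → b = true) ∧ (i ∈ T → b = false) then 1 else 0

lemma termVal_eq_prod_literalVal (S T : Finset (Fin n)) (x : Fin n → Bool) :
    termVal S T x = ∏ i, literalVal S T i (x i) := by
  simp only [termVal, literalVal, prod_boole, mem_univ, true_implies, forall_and]

lemma sum_literalVal {S T : Finset (Fin n)} (hST : Disjoint S T) (i : Fin n) :
    ∑ b, literalVal S T i b = if i ∈ S ∪ T then 1 else 2 := by
  by_cases hS : i ∈ S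
  · have hT : i ∉ T := disjoint_left.mp hST hS
    simp [literalVal, hS, hT]
  · by_cases hT : i ∈ T <;> simp [literalVal, hS, hT]

lemma sum_termVal_div {S T : Finset (Fin n)} (hST : Disjoint S T) :
    (∑ x, termVal S T x) / 2 ^ n = (2 : ℝ) ^ (-(#S + #T : ℤ)) := by
  have hcard : #(S ∪ T) = #S + #T := card_union_of_disjoint hST
  have hle : #(S ∪ T) ≤ n := by simpa using card_le_univ (S ∪ T)
  have hsum : ∑ x, termVal S T x = 2 ^ (n - #(S ∪ T)) := by
    simp_rw [termVal_eq_prod_literalVal, ← Fintype.prod_sum, sum_literalVal hST]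
    simp only [prod_ite, prod_const_one, prod_const, one_mul, filter_not, filter_mem_eq_inter,
      univ_inter, ← compl_eq_univ_sdiff, card_compl, Fintype.card_fin]
  rw [hsum, ← zpow_natCast, ← zpow_natCast, ← zpow_sub₀ two_ne_zero, Nat.cast_sub hle, hcard]
  congr 1
  push_cast
  ring

def termPoly (γ : Finset (Fin n) × Finset (Fin n) → ℝ) (x : Fin n → Bool) : ℝ :=
  ∑ p, γ p * termVal p.1 p.2 x

def IsAlmostKWiseIndep (ε : ℝ) (k : ℕ) (D : (Fin n → Bool) → ℝ) : Prop :=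
  ∀ S T : Finset (Fin n), Disjoint S T → #S + #T ≤ k →
    (1 - ε) * (2 : ℝ) ^ (-(#S + #T : ℤ)) ≤ ∑ x, D x * termVal S T x ∧
    ∑ x, D x * termVal S T x ≤ (1 + ε) * (2 : ℝ) ^ (-(#S + #T : ℤ))

lemma sum_mul_termPoly (D : (Fin n → Bool) → ℝ) (γ : Finset (Fin n) × Finset (Fin n) → ℝ) :
    ∑ x, D x * termPoly γ x = ∑ p, γ p * ∑ x, D x * termVal p.1 p.2 x := by
  simp only [termPoly, mul_sum]
  rw [sum_comm]
  simp only [mul_left_comm]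

lemma sum_termPoly_div {γ : Finset (Fin n) × Finset (Fin n) → ℝ}
    (hγ : ∀ p, γ p ≠ 0 → Disjoint p.1 p.2) :
    (∑ x, termPoly γ x) / 2 ^ n = ∑ p, γ p * (2 : ℝ) ^ (-(#p.1 + #p.2 : ℤ)) := by
  simp only [termPoly]
  rw [sum_comm, sum_div]
  refine sum_congr rfl fun p _ => ?_
  rcases eq_or_ne (γ p) 0 with hp | hp
  · simp [hp]
  · rw [← mul_sum, mul_div_assoc, sum_termVal_div (hγ p hp)]

lemma IsAlmostKWiseIndep.abs_sum_mul_termVal_sub_le {ε : ℝ} {k : ℕ} {D : (Fin n → Bool) → ℝ}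
    (hD : IsAlmostKWiseIndep ε k D) {S T : Finset (Fin n)} (hST : Disjoint S T)
    (hk : #S + #T ≤ k) :
    |∑ x, D x * termVal S T x - (2 : ℝ) ^ (-(#S + #T : ℤ))| ≤
      ε * (2 : ℝ) ^ (-(#S + #T : ℤ)) := by
  obtain ⟨hlo, hhi⟩ := hD S T hST hk
  rw [abs_le]
  constructor <;> linarith

lemma IsAlmostKWiseIndep.abs_sum_mul_termPoly_sub_le {ε : ℝ} {k : ℕ}
    {D : (Fin n → Bool) → ℝ} (hD : IsAlmostKWiseIndep ε k D)
    {γ : Finset (Fin n) × Finset (Fin n) → ℝ}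
    (hγ : ∀ p, γ p ≠ 0 → Disjoint p.1 p.2 ∧ #p.1 + #p.2 ≤ k) :
    |∑ x, D x * termPoly γ x - (∑ x, termPoly γ x) / 2 ^ n| ≤
      ε * ∑ p, |γ p| * (2 : ℝ) ^ (-(#p.1 + #p.2 : ℤ)) := by
  rw [sum_mul_termPoly, sum_termPoly_div fun p hp => (hγ p hp).1, ← sum_sub_distrib, mul_sum]
  refine (abs_sum_le_sum_abs _ _).trans (sum_le_sum fun p _ => ?_)
  rcases eq_or_ne (γ p) 0 with hp | hp
  · simp [hp]
  · calc |γ p * ∑ x, D x * termVal p.1 p.2 x - γ p * (2 : ℝ) ^ (-(#p.1 + #p.2 : ℤ))|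
        = |γ p| * |∑ x, D x * termVal p.1 p.2 x - (2 : ℝ) ^ (-(#p.1 + #p.2 : ℤ))| := by
          rw [← mul_sub, abs_mul]
      _ ≤ |γ p| * (ε * (2 : ℝ) ^ (-(#p.1 + #p.2 : ℤ))) :=
          mul_le_mul_of_nonneg_left
            (hD.abs_sum_mul_termVal_sub_le (hγ p hp).1 (hγ p hp).2) (abs_nonneg _)
      _ = ε * (|γ p| * (2 : ℝ) ^ (-(#p.1 + #p.2 : ℤ))) := by ring

end

theorem lowfat_sandwich_implies_gln_general (n k : ℕ) (ε δ M : ℝ) (hε : 0 ≤ ε)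
    (D : (Fin n → Bool) → ℝ) (hD0 : ∀ x, 0 ≤ D x)
    (hind : ∀ S T : Finset (Fin n), Disjoint S T → S.card + T.card ≤ k →
      (1 - ε) * (2 : ℝ) ^ (-(S.card + T.card : ℤ)) ≤ ∑ x, D x * termVal S T x ∧
      ∑ x, D x * termVal S T x ≤ (1 + ε) * (2 : ℝ) ^ (-(S.card + T.card : ℤ)))
    (f : (Fin n → Bool) → ℝ)
    (α β : Finset (Fin n) × Finset (Fin n) → ℝ)
    (hα : ∀ p, α p ≠ 0 → Disjoint p.1 p.2 ∧ p.1.card + p.2.card ≤ k)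
    (hβ : ∀ p, β p ≠ 0 → Disjoint p.1 p.2 ∧ p.1.card + p.2.card ≤ k)
    (hsand : ∀ x, (∑ p : Finset (Fin n) × Finset (Fin n), α p * termVal p.1 p.2 x) ≤ f x
      ∧ f x ≤ ∑ p : Finset (Fin n) × Finset (Fin n), β p * termVal p.1 p.2 x)
    (hαM : ∑ p : Finset (Fin n) × Finset (Fin n),
        |α p| * (2 : ℝ) ^ (-(p.1.card + p.2.card : ℤ)) ≤ M)
    (hβM : ∑ p : Finset (Fin n) × Finset (Fin n),
        |β p| * (2 : ℝ) ^ (-(p.1.card + p.2.card : ℤ)) ≤ M)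
    (hδ : (∑ x, ((∑ p : Finset (Fin n) × Finset (Fin n), β p * termVal p.1 p.2 x)
              - ∑ p : Finset (Fin n) × Finset (Fin n), α p * termVal p.1 p.2 x)) / 2 ^ n
        ≤ δ) :
    |(∑ x, D x * f x) - (∑ x, f x) / 2 ^ n| ≤ δ + ε * M := by
  have hD : IsAlmostKWiseIndep ε k D := hind
  have hlow := abs_le.mp <|
    (hD.abs_sum_mul_termPoly_sub_le hα).trans (mul_le_mul_of_nonneg_left hαM hε)
  have hupp := abs_le.mp <|
    (hD.abs_sum_mul_termPoly_sub_le hβ).trans (mul_le_mul_of_nonneg_left hβM hε)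
  have hD_low : ∑ x, D x * termPoly α x ≤ ∑ x, D x * f x :=
    sum_le_sum fun x _ => mul_le_mul_of_nonneg_left (hsand x).1 (hD0 x)
  have hD_upp : ∑ x, D x * f x ≤ ∑ x, D x * termPoly β x :=
    sum_le_sum fun x _ => mul_le_mul_of_nonneg_left (hsand x).2 (hD0 x)
  have hU_low : (∑ x, termPoly α x) / 2 ^ n ≤ (∑ x, f x) / 2 ^ n := by
    gcongr with x; exact (hsand x).1
  have hU_upp : (∑ x, f x) / 2 ^ n ≤ (∑ x, termPoly β x) / 2 ^ n := by
    gcongr with x; exact (hsand x).2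
  have hgap : (∑ x, termPoly β x) / 2 ^ n - (∑ x, termPoly α x) / 2 ^ n ≤ δ := by
    rwa [← sub_div, ← sum_sub_distrib]
  rw [abs_le]
  constructor <;> linarith

/-- Low-fat sandwiching implies the Generalized Linial–Nisan conclusion (quantitative
core, for fixed `n`): if `f : {0,1}^n → {0,1}` admits degree-`≤ k` low-fat sandwiching
polynomials `p_ℓ ≤ f ≤ p_u` with `E_U[p_u - p_ℓ] ≤ δ` and coefficient sums at most `M`,
then for every `ε`-almost `k`-wise independent distribution `D`,
`|E_D[f] - E_U[f]| ≤ δ + εM`. -/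
theorem lowfat_sandwich_implies_gln (n k : ℕ) (ε δ M : ℝ) (hε : 0 ≤ ε)
    (D : (Fin n → Bool) → ℝ) (hD0 : ∀ x, 0 ≤ D x) (hD1 : ∑ x, D x = 1)
    (hind : ∀ S T : Finset (Fin n), Disjoint S T → S.card + T.card ≤ k →
      (1 - ε) * (2 : ℝ) ^ (-(S.card + T.card : ℤ)) ≤ ∑ x, D x * termVal S T x ∧
      ∑ x, D x * termVal S T x ≤ (1 + ε) * (2 : ℝ) ^ (-(S.card + T.card : ℤ)))
    (f : (Fin n → Bool) → ℝ) (hf : ∀ x, f x = 0 ∨ f x = 1)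
    (α β : Finset (Fin n) × Finset (Fin n) → ℝ)
    (hα : ∀ p, α p ≠ 0 → Disjoint p.1 p.2 ∧ p.1.card + p.2.card ≤ k)
    (hβ : ∀ p, β p ≠ 0 → Disjoint p.1 p.2 ∧ p.1.card + p.2.card ≤ k)
    (hsand : ∀ x, (∑ p : Finset (Fin n) × Finset (Fin n), α p * termVal p.1 p.2 x) ≤ f x
      ∧ f x ≤ ∑ p : Finset (Fin n) × Finset (Fin n), β p * termVal p.1 p.2 x)
    (hαM : ∑ p : Finset (Fin n) × Finset (Fin n),
        |α p| * (2 : ℝ) ^ (-(p.1.card + p.2.card : ℤ)) ≤ M)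
    (hβM : ∑ p : Finset (Fin n) × Finset (Fin n),
        |β p| * (2 : ℝ) ^ (-(p.1.card + p.2.card : ℤ)) ≤ M)
    (hδ : (∑ x, ((∑ p : Finset (Fin n) × Finset (Fin n), β p * termVal p.1 p.2 x)
              - ∑ p : Finset (Fin n) × Finset (Fin n), α p * termVal p.1 p.2 x)) / 2 ^ n
        ≤ δ) :
    |(∑ x, D x * f x) - (∑ x, f x) / 2 ^ n| ≤ δ + ε * M :=
  lowfat_sandwich_implies_gln_general n k ε δ M hε D hD0 hind f α β hα hβ hsand hαM hβM hδ
end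

section
/- Fix s ∈ {0,1}^n and let D[s] be the distribution over functions f : {0,1}^n → {-1,1} given by the equal mixture of: (A) each f(x) independently equals 1 with probability 1/2 + (-1)^{s·x}/(2√N), and (B) each f(x) independently equals 1 with probability 1/2 - (-1)^{s·x}/(2√N), where N = 2^n. Then the probability of a fixed function f under D[s] equals 2^{-(N+1)} · (1 - 1/N)^{N/2} · [((1+1/√N)/(1-1/√N))^{√N f̂(s)/2} + ((1-1/√N)/(1+1/√N))^{√N f̂(s)/2}], where f̂(s) is the Fourier coefficient of f at s. -/
/-!
Put `ε x = (-1)^{s·x} f x ∈ {±1}` and `u = 1/√N`. Each factor of model A is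
`(1 + ε u)/2 = ((1 - u²)/4)^{1/2} ((1 + u)/(1 - u))^{ε/2}`, so the product over all `x` is
`((1 - u²)/4)^{N/2} ((1 + u)/(1 - u))^{(∑ ε)/2}` with `∑ ε = √N f̂(s)`; model B is model A with
`u` replaced by `-u`, which inverts the ratio.
-/

open Finset

lemma mul_rpow_half_mul_div_rpow {p q : ℝ} (hp : 0 < p) (hq : 0 < q) (t : ℝ) :
    (p * q) ^ (1 / 2 : ℝ) * (p / q) ^ (t / 2) = p ^ ((1 + t) / 2) * q ^ ((1 - t) / 2) := by
  rw [Real.mul_rpow hp.le hq.le, Real.div_rpow hp.le hq.le, div_eq_mul_inv (p ^ _),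
    ← Real.rpow_neg hq.le, mul_mul_mul_comm, ← Real.rpow_add hp, ← Real.rpow_add hq]
  ring_nf

lemma one_add_mul_div_two_eq_rpow {u ε : ℝ} (hu : |u| < 1) (hε : ε = 1 ∨ ε = -1) :
    (1 + ε * u) / 2 = ((1 - u ^ 2) / 4) ^ (1 / 2 : ℝ) * ((1 + u) / (1 - u)) ^ (ε / 2) := by
  obtain ⟨hu₁, hu₂⟩ := abs_lt.mp hu
  have hp : 0 < (1 + u) / 2 := by linarith
  have hq : 0 < (1 - u) / 2 := by linarith
  have h₁ : (1 - u ^ 2) / 4 = (1 + u) / 2 * ((1 - u) / 2) := by ring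
  have h₂ : (1 + u) / (1 - u) = (1 + u) / 2 / ((1 - u) / 2) := by
    rw [div_div_div_cancel_right₀ two_ne_zero]
  rw [h₁, h₂, mul_rpow_half_mul_div_rpow hp hq]
  rcases hε with rfl | rfl
  · norm_num
  · norm_num; ring

lemma prod_one_add_mul_div_two_eq_rpow {ι : Type*} [Fintype ι] {u : ℝ} (hu : |u| < 1)
    (ε : ι → ℝ) (hε : ∀ i, ε i = 1 ∨ ε i = -1) :
    ∏ i, (1 + ε i * u) / 2
      = ((1 - u ^ 2) / 4) ^ ((Fintype.card ι : ℝ) / 2) * ((1 + u) / (1 - u)) ^ ((∑ i, ε i) / 2) := by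
  obtain ⟨hu₁, hu₂⟩ := abs_lt.mp hu
  have hx : 0 ≤ (1 - u ^ 2) / 4 := by nlinarith
  have hq : 0 < (1 + u) / (1 - u) := by apply div_pos <;> linarith
  simp_rw [one_add_mul_div_two_eq_rpow hu (hε _), prod_mul_distrib, prod_const, card_univ,
    ← Real.rpow_mul_natCast hx, ← Real.rpow_sum_of_pos hq, sum_div]
  ring_nf

lemma div_four_rpow_two_pow_div_two {n : ℕ} (hn : 1 ≤ n) (y : ℝ) :
    (y / 4) ^ ((2 ^ n : ℝ) / 2) = y ^ (2 ^ (n - 1)) / 2 ^ (2 ^ n) := by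
  have hN : (2 : ℝ) ^ n / 2 = ((2 ^ (n - 1) : ℕ) : ℝ) := by
    rw [Nat.cast_pow, Nat.cast_ofNat, ← pow_sub_one_mul (by omega : n ≠ 0)]
    ring
  rw [hN, Real.rpow_natCast, div_pow, ← pow_mul_pow_sub 2 hn, pow_one, pow_mul]
  norm_num

lemma neg_one_pow_mul_eq_one_or_eq_neg_one {R : Type*} [Ring R] {y : R} (k : ℕ)
    (hy : y = 1 ∨ y = -1) : (-1) ^ k * y = 1 ∨ (-1) ^ k * y = -1 := by
  rcases neg_one_pow_eq_or R k with h | h <;> rcases hy with rfl | rfl <;> simp [h]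

lemma half_mul_prod_add_prod_eq_rpow {ι : Type*} [Fintype ι] {c : ℝ} (hc : 1 < c) (ε : ι → ℝ)
    (hε : ∀ i, ε i = 1 ∨ ε i = -1) :
    1 / 2 * (∏ i, (1 / 2 + ε i / (2 * c)) + ∏ i, (1 / 2 - ε i / (2 * c)))
      = ((1 - 1 / c ^ 2) / 4) ^ ((Fintype.card ι : ℝ) / 2) / 2 *
        (((1 + 1 / c) / (1 - 1 / c)) ^ ((∑ i, ε i) / 2)
          + ((1 - 1 / c) / (1 + 1 / c)) ^ ((∑ i, ε i) / 2)) := by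
  have hc₀ : c ≠ 0 := by positivity
  have hu : |1 / c| < 1 := by
    rw [abs_of_pos (by positivity)]
    exact (div_lt_one (by positivity)).mpr hc
  have hu' : |-(1 / c)| < 1 := by rwa [abs_neg]
  have hA : ∀ i, 1 / 2 + ε i / (2 * c) = (1 + ε i * (1 / c)) / 2 := fun i => by
    field_simp
  have hB : ∀ i, 1 / 2 - ε i / (2 * c) = (1 + ε i * -(1 / c)) / 2 := fun i => by
    field_simp; ring
  simp only [hA, hB, prod_one_add_mul_div_two_eq_rpow hu ε hε,
    prod_one_add_mul_div_two_eq_rpow hu' ε hε,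
    neg_sq, div_pow, one_pow, ← sub_eq_add_neg, sub_neg_eq_add]
  ring

/-- Exact probability of a fixed function `f : {0,1}^n → {-1,1}` under the distribution
`D[s]`, the equal mixture of: (A) each `f(x) = 1` independently with probability
`1/2 + (-1)^{s·x}/(2√N)`, and (B) each `f(x) = 1` independently with probability
`1/2 - (-1)^{s·x}/(2√N)` (where `N = 2^n`). The probability equals
`2^{-(N+1)} (1-1/N)^{N/2} [((1+1/√N)/(1-1/√N))^{√N f̂(s)/2} + ((1-1/√N)/(1+1/√N))^{√N f̂(s)/2}]`. -/
theorem prob_under_biased_mixture (n : ℕ) (hn : 1 ≤ n) (s : Fin n → Bool)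
    (f : (Fin n → Bool) → ℝ) (hf : ∀ x, f x = 1 ∨ f x = -1) :
    (1 / 2) *
      ((∏ x : Fin n → Bool,
          (1 / 2 + (-1 : ℝ) ^ ((Finset.univ.filter fun i => s i && x i).card) * f x
            / (2 * Real.sqrt (2 ^ n))))
        + ∏ x : Fin n → Bool,
          (1 / 2 - (-1 : ℝ) ^ ((Finset.univ.filter fun i => s i && x i).card) * f x
            / (2 * Real.sqrt (2 ^ n))))
    = (1 - 1 / (2 ^ n : ℝ)) ^ (2 ^ (n - 1)) / 2 ^ (2 ^ n + 1) *
        (((1 + 1 / Real.sqrt (2 ^ n)) / (1 - 1 / Real.sqrt (2 ^ n)))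
            ^ (Real.sqrt (2 ^ n) *
                ((1 / Real.sqrt (2 ^ n)) *
                  ∑ x : Fin n → Bool,
                    (-1 : ℝ) ^ ((Finset.univ.filter fun i => s i && x i).card) * f x)
                / 2)
          + ((1 - 1 / Real.sqrt (2 ^ n)) / (1 + 1 / Real.sqrt (2 ^ n)))
            ^ (Real.sqrt (2 ^ n) *
                ((1 / Real.sqrt (2 ^ n)) *
                  ∑ x : Fin n → Bool,
                    (-1 : ℝ) ^ ((Finset.univ.filter fun i => s i && x i).card) * f x)
                / 2)) := by
  have hε := fun x => neg_one_pow_mul_eq_one_or_eq_neg_one (R := ℝ) #{i | s i && x i} (hf x)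
  have hc : 1 < √(2 ^ n : ℝ) := by
    rw [Real.lt_sqrt zero_le_one, one_pow]
    exact one_lt_pow₀ one_lt_two (by omega)
  have hexp : ∀ S : ℝ, √(2 ^ n : ℝ) * (1 / √(2 ^ n : ℝ) * S) / 2 = S / 2 := fun S => by
    field_simp
  rw [half_mul_prod_add_prod_eq_rpow hc _ hε, Real.sq_sqrt (by positivity), hexp]
  simp only [Fintype.card_fun, Fintype.card_bool, Fintype.card_fin, Nat.cast_pow, Nat.cast_ofNat,
    div_four_rpow_two_pow_div_two hn]
  ring
end
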